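/- Let n ≥ 1 and N ≥ 1, and for each i = 1, …, N·n let a_i = (a_{i,1}, …, a_{i,n}) ∈ ℝⁿ satisfy 0 < ∑_{j=1}^{n} |a_{i,j}| < 1, with A_i the companion matrix of a_i. Then there exists ε with 0 < ε < 1 such that ‖A_{Nn} A_{Nn−1} ⋯ A_1‖_∞ ≤ ε^N. -/
import Mathlib


open Finset

/-- The companion matrix of a vector `a = (a 0, …, a (n-1))` (representing
`(a_{1}, …, a_{n})` in 1-indexed notation): superdiagonal of ones, last row
`(-a_n, -a_{n-1}, …, -a_1)`. -/
def companion (n : ℕ) (a : Fin n → ℝ) : Matrix (Fin n) (Fin n) ℝ :=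
  Matrix.of fun j k =>
    if (j : ℕ) = n - 1 then -a k.rev
    else if (k : ℕ) = (j : ℕ) + 1 then 1 else 0

/-- `prodDesc A k = A k * A (k-1) * ⋯ * A 1`. -/
def prodDesc {m : ℕ} (A : ℕ → Matrix (Fin m) (Fin m) ℝ) : ℕ → Matrix (Fin m) (Fin m) ℝ
  | 0 => 1
  | k + 1 => A (k + 1) * prodDesc A k

/-- The operator norm induced by the ℓ∞ norm: the maximum over rows of the ℓ¹ norm of
the row. -/
noncomputable def rowSumNorm {m : ℕ} (M : Matrix (Fin m) (Fin m) ℝ) : ℝ :=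
  ⨆ j : Fin m, ∑ k : Fin m, |M j k|

/-- Row-wise ℓ¹ bound for a product of matrices. -/
lemma mulRowBound {m : ℕ} (B P : Matrix (Fin m) (Fin m) ℝ) (j : Fin m) :
    ∑ k, |(B * P) j k| ≤ ∑ l, |B j l| * (∑ k, |P l k|) := by
  calc ∑ k, |(B * P) j k| = ∑ k, |∑ l, B j l * P l k| := by
        simp [Matrix.mul_apply]
    _ ≤ ∑ k, ∑ l, |B j l| * |P l k| := by
        refine Finset.sum_le_sum fun k _ => ?_
        refine (Finset.abs_sum_le_sum_abs _ _).trans ?_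
        simp [abs_mul]
    _ = ∑ l, |B j l| * (∑ k, |P l k|) := by
        rw [Finset.sum_comm]
        simp [Finset.mul_sum]

lemma companion_absrow_ne {n : ℕ} (v : Fin n → ℝ) (j : Fin n) (h : (j : ℕ) ≠ n - 1)
    (r : Fin n → ℝ) :
    ∑ l, |companion n v j l| * r l = r ⟨(j : ℕ) + 1, by have := j.isLt; omega⟩ := by
  have hlt : (j : ℕ) + 1 < n := by have := j.isLt; omega
  have key : ∀ l : Fin n, |companion n v j l| * r l
      = if l = ⟨(j : ℕ) + 1, hlt⟩ then r ⟨(j : ℕ) + 1, hlt⟩ else 0 := by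
    intro l
    simp only [companion, Matrix.of_apply, if_neg h]
    by_cases hl : (l : ℕ) = (j : ℕ) + 1
    · rw [if_pos hl, if_pos (Fin.ext hl), show l = ⟨(j : ℕ) + 1, hlt⟩ from Fin.ext hl]
      simp
    · rw [if_neg hl, if_neg (fun hc => hl (by rw [hc]))]
      simp
  rw [Finset.sum_congr rfl fun l _ => key l, Finset.sum_ite_eq' Finset.univ _ (fun _ => _)]
  simp

lemma companion_absrow_last {n : ℕ} (v : Fin n → ℝ) (j : Fin n) (h : (j : ℕ) = n - 1)
    (r : Fin n → ℝ) :
    ∑ l, |companion n v j l| * r l = ∑ l, |v l.rev| * r l := by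
  simp [companion, h]

lemma sum_abs_rev {n : ℕ} (v : Fin n → ℝ) : ∑ l : Fin n, |v l.rev| = ∑ l : Fin n, |v l| :=
  Equiv.sum_comp Fin.revPerm (fun l => |v l|)

/-- Block induction: a partial product of `k ≤ n` companion matrices has all row sums
`≤ 1`, and row `j` has sum `≤ ε` whenever `n ≤ j + k`. -/
lemma block_bound {n : ℕ} (hn : 1 ≤ n) (t : ℕ) (a : ℕ → Fin n → ℝ) (ε : ℝ) (hε0 : 0 ≤ ε)
    (hε1 : ε ≤ 1)
    (hS : ∀ i, 1 ≤ i → i ≤ n → ∑ j, |a (i + t) j| ≤ ε) :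
    ∀ k, k ≤ n →
      (∀ j : Fin n, ∑ kk, |prodDesc (fun i => companion n (a (i + t))) k j kk| ≤ 1) ∧
      (∀ j : Fin n, n ≤ (j : ℕ) + k →
        ∑ kk, |prodDesc (fun i => companion n (a (i + t))) k j kk| ≤ ε) := by
  intro k
  induction k with
  | zero =>
    intro _
    constructor
    · intro j
      simp [prodDesc, Matrix.one_apply, apply_ite abs, Finset.sum_ite_eq]
    · intro j hj
      exact absurd hj (by have := j.isLt; omega)
  | succ k ih =>
    intro hk
    obtain ⟨ih1, ih2⟩ := ih (Nat.le_of_succ_le hk)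
    set P := prodDesc (fun i => companion n (a (i + t))) k with hP
    have hSk : ∑ j, |a (k + 1 + t) j| ≤ ε := hS (k + 1) (by omega) hk
    have step : ∀ j : Fin n,
        ∑ kk, |prodDesc (fun i => companion n (a (i + t))) (k + 1) j kk|
          ≤ ∑ l, |companion n (a (k + 1 + t)) j l| * (∑ kk, |P l kk|) := by
      intro j
      exact mulRowBound _ _ j
    constructor
    · intro j
      refine (step j).trans ?_
      by_cases h : (j : ℕ) = n - 1
      · rw [companion_absrow_last _ _ h]
        calc ∑ l, |a (k + 1 + t) l.rev| * (∑ kk, |P l kk|)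
            ≤ ∑ l, |a (k + 1 + t) l.rev| * 1 :=
              Finset.sum_le_sum fun l _ =>
                mul_le_mul_of_nonneg_left (ih1 l) (abs_nonneg _)
          _ = ∑ l : Fin n, |a (k + 1 + t) l.rev| := by simp
          _ = ∑ l : Fin n, |a (k + 1 + t) l| := sum_abs_rev _
          _ ≤ ε := hSk
          _ ≤ 1 := hε1
      · rw [companion_absrow_ne _ _ h]
        exact ih1 _
    · intro j hj
      refine (step j).trans ?_
      by_cases h : (j : ℕ) = n - 1
      · rw [companion_absrow_last _ _ h]
        calc ∑ l, |a (k + 1 + t) l.rev| * (∑ kk, |P l kk|)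
            ≤ ∑ l, |a (k + 1 + t) l.rev| * 1 :=
              Finset.sum_le_sum fun l _ =>
                mul_le_mul_of_nonneg_left (ih1 l) (abs_nonneg _)
          _ = ∑ l : Fin n, |a (k + 1 + t) l.rev| := by simp
          _ = ∑ l : Fin n, |a (k + 1 + t) l| := sum_abs_rev _
          _ ≤ ε := hSk
      · rw [companion_absrow_ne _ _ h]
        exact ih2 _ (by simp; omega)

lemma prodDesc_add {m : ℕ} (A : ℕ → Matrix (Fin m) (Fin m) ℝ) (t : ℕ) :
    ∀ s, prodDesc A (t + s) = prodDesc (fun i => A (i + t)) s * prodDesc A t := by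
  intro s
  induction s with
  | zero => simp [prodDesc]
  | succ s ih =>
    have h : t + (s + 1) = (t + s) + 1 := by omega
    rw [h]
    show A (t + s + 1) * prodDesc A (t + s) = _
    rw [ih, show prodDesc (fun i => A (i + t)) (s + 1)
        = A (s + 1 + t) * prodDesc (fun i => A (i + t)) s from rfl,
      show t + s + 1 = s + 1 + t by omega, Matrix.mul_assoc]

/-- Second part of Lemma 5 of the paper (Appendix F): a product of `N·n` companion
matrices with coefficient vectors of ℓ¹ norm strictly between 0 and 1 has
ℓ∞-operator norm at most `ε^N` for some `0 < ε < 1`. -/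
theorem stmt_14 (n : ℕ) (hn : 1 ≤ n) (N : ℕ) (hN : 1 ≤ N) (a : ℕ → Fin n → ℝ)
    (ha : ∀ i : ℕ, 1 ≤ i → i ≤ N * n →
      0 < ∑ j : Fin n, |a i j| ∧ ∑ j : Fin n, |a i j| < 1) :
    ∃ ε : ℝ, 0 < ε ∧ ε < 1 ∧
      rowSumNorm (prodDesc (fun i => companion n (a i)) (N * n)) ≤ ε ^ N := by
  haveI : Nonempty (Fin n) := ⟨⟨0, hn⟩⟩
  have hNn : 1 ≤ N * n := Nat.one_le_iff_ne_zero.mpr (by positivity)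
  set s : Finset ℝ := (Finset.Icc 1 (N * n)).image (fun i => ∑ j : Fin n, |a i j|) with hs
  have hsne : s.Nonempty := by
    refine ⟨∑ j : Fin n, |a 1 j|, ?_⟩
    exact Finset.mem_image.mpr ⟨1, Finset.mem_Icc.mpr ⟨le_refl 1, hNn⟩, rfl⟩
  set ε : ℝ := s.max' hsne with hε
  have hε_ge : ∀ i, 1 ≤ i → i ≤ N * n → ∑ j : Fin n, |a i j| ≤ ε := by
    intro i h1 h2
    exact Finset.le_max' s _ (Finset.mem_image.mpr ⟨i, Finset.mem_Icc.mpr ⟨h1, h2⟩, rfl⟩)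
  have hε_pos : 0 < ε := lt_of_lt_of_le (ha 1 le_rfl hNn).1 (hε_ge 1 le_rfl hNn)
  have hε_lt : ε < 1 := by
    rw [hε, Finset.max'_lt_iff]
    intro y hy
    obtain ⟨i, hi, rfl⟩ := Finset.mem_image.mp hy
    rw [Finset.mem_Icc] at hi
    exact (ha i hi.1 hi.2).2
  refine ⟨ε, hε_pos, hε_lt, ?_⟩
  have main : ∀ M, M ≤ N → ∀ j : Fin n,
      ∑ k, |prodDesc (fun i => companion n (a i)) (M * n) j k| ≤ ε ^ M := by
    intro M
    induction M with
    | zero =>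
      intro _ j
      simp [prodDesc, Matrix.one_apply, apply_ite abs, Finset.sum_ite_eq]
    | succ M ih =>
      intro hM j
      have hMN : M ≤ N := Nat.le_of_succ_le hM
      have hrw : (M + 1) * n = M * n + n := by ring
      rw [hrw, prodDesc_add]
      set B := prodDesc (fun i => companion n (a (i + M * n))) n with hB
      set P := prodDesc (fun i => companion n (a i)) (M * n) with hPdef
      have hblock := (block_bound hn (M * n) a ε (le_of_lt hε_pos) (le_of_lt hε_lt)
        (fun i h1 h2 => hε_ge (i + M * n) (by omega)
          (by calc i + M * n ≤ n + M * n := by omega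
                _ = (M + 1) * n := by ring
                _ ≤ N * n := Nat.mul_le_mul_right n hM))) n le_rfl
      have hBrow : ∀ l : Fin n, ∑ k, |B l k| ≤ ε := fun l =>
        hblock.2 l (by have := l.isLt; omega)
      calc ∑ k, |(B * P) j k| ≤ ∑ l, |B j l| * (∑ k, |P l k|) := mulRowBound B P j
        _ ≤ ∑ l, |B j l| * ε ^ M :=
            Finset.sum_le_sum fun l _ =>
              mul_le_mul_of_nonneg_left (ih hMN l) (abs_nonneg _)
        _ = (∑ l, |B j l|) * ε ^ M := by rw [Finset.sum_mul]
        _ ≤ ε * ε ^ M := by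
            refine mul_le_mul_of_nonneg_right (hBrow j) (by positivity)
        _ = ε ^ (M + 1) := by ring
  exact ciSup_le fun j => main N le_rfl j
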